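/- Let $g$ be an impact graph with positive probability, with root set $R=R(g)$, and let $M=M(g,C^\ast)$ be its impact exchange matrix. Then the maximum cycle mean satisfies $\lambda(M)<1$. -/

import Mathlib

open scoped NNReal

noncomputable section

open MeasureTheory ProbabilityTheory

/-- Max-times matrix-vector product: `(A ⊙ x) i = max_j (A i j * x j)`. -/
def maxMul {d : ℕ} (A : Matrix (Fin d) (Fin d) ℝ≥0) (x : Fin d → ℝ≥0) : Fin d → ℝ≥0 :=
  fun i => Finset.univ.sup fun j => A i j * x j

/-- Max-times matrix product. -/
def maxMatMul {d : ℕ} (A B : Matrix (Fin d) (Fin d) ℝ≥0) : Matrix (Fin d) (Fin d) ℝ≥0 :=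
  Matrix.of fun i j => Finset.univ.sup fun l => A i l * B l j

/-- Max-times matrix powers, with `A^{⊙0}` the identity matrix. -/
def maxPow {d : ℕ} (A : Matrix (Fin d) (Fin d) ℝ≥0) : ℕ → Matrix (Fin d) (Fin d) ℝ≥0
  | 0 => Matrix.of fun i j => if i = j then 1 else 0
  | k + 1 => maxMatMul A (maxPow A k)

/-- Kleene star `C^* = I ∨ C ∨ C^{⊙2} ∨ ⋯ ∨ C^{⊙(d-1)}` over the max-times semiring. -/
def kleene {d : ℕ} (C : Matrix (Fin d) (Fin d) ℝ≥0) : Matrix (Fin d) (Fin d) ℝ≥0 :=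
  Matrix.of fun i j => (Finset.range d).sup fun k => maxPow C k i j

/-- The support digraph of `C` (edge `j → i` iff `C i j ≠ 0`) has no directed cycle. -/
def SupportAcyclic {d : ℕ} (C : Matrix (Fin d) (Fin d) ℝ≥0) : Prop :=
  ¬ ∃ (r : ℕ) (c : Fin (r + 1) → Fin d), Function.Injective c ∧ ∀ t, C (c (t + 1)) (c t) ≠ 0

/-- Edge `j → i` of the impact graph of the innovation vector `z`:
`i ≠ j` and `X i = c^*_{ij} * z j`, where `X = C^* ⊙ z`. -/
def impactEdge {d : ℕ} (C : Matrix (Fin d) (Fin d) ℝ≥0) (z : Fin d → ℝ≥0) (i j : Fin d) : Prop :=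
  i ≠ j ∧ maxMul (kleene C) z i = kleene C i j * z j

/-- Weight of the directed cycle `c 0 → c 1 → ⋯ → c r → c 0`
(the edge `j → i` contributes the entry `A i j`). -/
def cycleWeight {d : ℕ} (A : Matrix (Fin d) (Fin d) ℝ≥0) {r : ℕ}
    (c : Fin (r + 1) → Fin d) : ℝ≥0 :=
  ∏ t, A (c (t + 1)) (c t)

/-- Maximum cycle mean: the supremum of the geometric means of the weights of
(simple) directed cycles of the digraph of `A`; it is `0` when this digraph is acyclic. -/
noncomputable def maxCycleMean {d : ℕ} (A : Matrix (Fin d) (Fin d) ℝ≥0) : ℝ≥0 :=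
  sSup {m | ∃ (r : ℕ) (c : Fin (r + 1) → Fin d),
    Function.Injective c ∧ m = cycleWeight A c ^ (((r : ℝ) + 1)⁻¹)}

open Classical in
/-- The impact exchange matrix `M(g, C^*)` of a graph `g` (edge `j → i` encoded as `g i j`),
defined on the root set of `g` and padded by zeros elsewhere:
`m_{r r'} = max_{i ∈ ch_g(r)} Cs i r' / Cs i r` for distinct roots `r ≠ r'`. -/
noncomputable def exchangeMatrix {d : ℕ} (Cs : Matrix (Fin d) (Fin d) ℝ≥0)
    (g : Fin d → Fin d → Prop) : Matrix (Fin d) (Fin d) ℝ≥0 :=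
  Matrix.of fun r r' =>
    if r ≠ r' ∧ (∀ j, ¬ g r j) ∧ (∀ j, ¬ g r' j) then
      Finset.univ.sup fun i => if g i r then Cs i r' / Cs i r else 0
    else 0



/-!
Since `g` has positive probability, it is realised by some innovation vector `z > 0` which, the
innovations being independent and atom-free, avoids the null set of exact ties between
`c*_{ir} z_r` and `c*_{ir'} z_{r'}`. For such `z`, every child `i` of a root `r` satisfies
`c*_{ir'} z_{r'} < c*_{ir} z_r` for every other root `r'`, i.e. `M z < z` entrywise. A positive
strict subeigenvector bounds each cycle weight of `M` below `1`, hence also `λ(M)`.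
-/

open Finset

theorem ProbabilityTheory.IndepFun.ae_ne_comp {Ω α β : Type*} [MeasurableSpace Ω]
    [MeasurableSpace α] [MeasurableSpace β] [MeasurableEq β]
    {μ : Measure Ω} [IsFiniteMeasure μ] {f : Ω → α} {h : Ω → β} {φ : α → β}
    (hf : Measurable f) (hh : Measurable h) (hφ : Measurable φ) (hind : IndepFun f h μ)
    (hatom : ∀ c, μ {ω | h ω = c} = 0) :
    ∀ᵐ ω ∂μ, h ω ≠ φ (f ω) := by
  have hs : MeasurableSet {p : α × β | p.2 = φ p.1} :=
    measurableSet_eq_fun measurable_snd (hφ.comp measurable_fst)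
  rw [ae_iff]
  simp only [not_not]
  calc μ {ω | h ω = φ (f ω)} = μ.map (fun ω => (f ω, h ω)) {p | p.2 = φ p.1} :=
        (Measure.map_apply (hf.prodMk hh) hs).symm
    _ = ((μ.map f).prod (μ.map h)) {p | p.2 = φ p.1} := by
        rw [(indepFun_iff_map_prod_eq_prod_map_map hf.aemeasurable hh.aemeasurable).1 hind]
    _ = 0 := by
        rw [Measure.prod_apply hs]
        simp [Measure.map_apply hh (measurableSet_singleton _), Set.preimage, hatom]

theorem le_maxMul {d : ℕ} (A : Matrix (Fin d) (Fin d) ℝ≥0) (x : Fin d → ℝ≥0) (i j : Fin d) :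
    A i j * x j ≤ maxMul A x i :=
  le_sup (f := fun j => A i j * x j) (mem_univ j)

theorem one_le_kleene_diag {d : ℕ} (C : Matrix (Fin d) (Fin d) ℝ≥0) (i : Fin d) :
    1 ≤ kleene C i i := by
  have h0 : maxPow C 0 i i = 1 := by simp [maxPow]
  exact h0 ▸ le_sup (f := fun k => maxPow C k i i) (mem_range.2 i.pos)

theorem maxMul_kleene_pos {d : ℕ} (C : Matrix (Fin d) (Fin d) ℝ≥0) {z : Fin d → ℝ≥0}
    (hz : ∀ k, 0 < z k) (i : Fin d) : 0 < maxMul (kleene C) z i :=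
  (mul_pos (one_pos.trans_le (one_le_kleene_diag C i)) (hz i)).trans_le (le_maxMul _ _ i i)

/-- `hgen` excludes the ties `c*_{ir'} z_{r'} = c*_{ir} z_r` with `c*_{ir'} ≠ 0`. -/
theorem impactEdge.mul_lt {d : ℕ} {C : Matrix (Fin d) (Fin d) ℝ≥0} {z : Fin d → ℝ≥0}
    (hz : ∀ k, 0 < z k)
    (hgen : ∀ i r r', r ≠ r' → z r' ≠ kleene C i r / kleene C i r' * z r)
    {i r r' : Fin d} (hir : impactEdge C z i r) (hr' : r' ≠ r) :
    kleene C i r' * z r' < kleene C i r * z r := by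
  obtain ⟨-, hX⟩ := hir
  have hXpos : 0 < kleene C i r * z r := hX ▸ maxMul_kleene_pos C hz i
  refine (hX ▸ le_maxMul _ z i r').lt_of_ne fun htie => hgen i r r' hr'.symm ?_
  have hCr' : kleene C i r' ≠ 0 := by
    rintro h0
    rw [h0, zero_mul] at htie
    exact hXpos.ne htie
  rw [div_mul_eq_mul_div, eq_div_iff hCr', mul_comm, htie]

theorem exchangeMatrix_mul_lt {d : ℕ} {Cs : Matrix (Fin d) (Fin d) ℝ≥0}
    {g : Fin d → Fin d → Prop} {z : Fin d → ℝ≥0} (hz : ∀ k, 0 < z k)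
    (hdom : ∀ i r r', g i r → r' ≠ r → Cs i r' * z r' < Cs i r * z r) (r r' : Fin d) :
    exchangeMatrix Cs g r r' * z r' < z r := by
  classical
  simp only [exchangeMatrix, Matrix.of_apply]
  split_ifs with hroots
  · have hquot : 0 < z r / z r' := div_pos (hz r) (hz r')
    have hsup : (univ.sup fun i => if g i r then Cs i r' / Cs i r else 0) < z r / z r' := by
      refine (Finset.sup_lt_iff hquot).2 fun i _ => ?_
      split_ifs with hgir
      · have hlt := hdom i r r' hgir (Ne.symm hroots.1)
        rw [div_lt_div_iff₀ (pos_of_mul_pos_left (zero_le.trans_lt hlt) zero_le) (hz r'),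
          mul_comm (z r)]
        exact hlt
      · exact hquot
    calc (univ.sup fun i => if g i r then Cs i r' / Cs i r else 0) * z r'
        < z r / z r' * z r' := mul_lt_mul_of_pos_right hsup (hz r')
      _ = z r := div_mul_cancel₀ _ (hz r').ne'
  · rw [zero_mul]
    exact hz r

/-- Multiply the inequalities `A (c (t+1)) (c t) * z (c t) < z (c (t+1))` around the cycle. -/
theorem cycleWeight_lt_one {d : ℕ} {A : Matrix (Fin d) (Fin d) ℝ≥0} {z : Fin d → ℝ≥0}
    (hz : ∀ k, 0 < z k) (hA : ∀ i j, A i j * z j < z i) {r : ℕ} (c : Fin (r + 1) → Fin d) :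
    cycleWeight A c < 1 := by
  have hP : 0 < ∏ t, z (c t) := prod_pos fun t _ => hz _
  have hshift : ∏ t : Fin (r + 1), z (c (t + 1)) = ∏ t, z (c t) :=
    Equiv.prod_comp (Equiv.addRight (1 : Fin (r + 1))) fun t => z (c t)
  have hprod : ∏ t, A (c (t + 1)) (c t) * z (c t) < ∏ t, z (c (t + 1)) := by
    by_cases hzero : ∃ t, A (c (t + 1)) (c t) * z (c t) = 0
    · obtain ⟨t, ht⟩ := hzero
      rw [prod_eq_zero (mem_univ t) ht, hshift]
      exact hP
    · push Not at hzero
      exact prod_lt_prod_of_nonempty (fun t _ => pos_iff_ne_zero.2 (hzero t))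
        (fun t _ => hA _ _) univ_nonempty
  refine lt_of_mul_lt_mul_right (a := ∏ t, z (c t)) ?_ zero_le
  rwa [one_mul, cycleWeight, ← prod_mul_distrib, ← hshift]

theorem maxCycleMean_lt_one {d : ℕ} {A : Matrix (Fin d) (Fin d) ℝ≥0}
    (hA : ∀ (r : ℕ) (c : Fin (r + 1) → Fin d), cycleWeight A c < 1) :
    maxCycleMean A < 1 := by
  set S := {m | ∃ (r : ℕ) (c : Fin (r + 1) → Fin d),
    Function.Injective c ∧ m = cycleWeight A c ^ (((r : ℝ) + 1)⁻¹)}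
  have hfin : S.Finite := by
    refine (Set.finite_range fun p : (Σ r : Fin (d + 1), Fin (r.1 + 1) → Fin d) =>
      cycleWeight A p.2 ^ (((p.1.1 : ℝ) + 1)⁻¹)).subset ?_
    rintro m ⟨r, c, hinj, rfl⟩
    have hr : r + 1 ≤ d := by simpa using Fintype.card_le_of_injective c hinj
    exact ⟨⟨⟨r, by omega⟩, c⟩, rfl⟩
  change sSup S < 1
  rcases S.eq_empty_or_nonempty with hemp | hne
  · rw [hemp, csSup_empty]
    exact zero_lt_one
  · obtain ⟨r, c, -, hm⟩ := hne.csSup_mem hfin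
    rw [hm]
    exact NNReal.rpow_lt_one (hA r c) (by positivity)

theorem stmt9_general {d : ℕ} (C : Matrix (Fin d) (Fin d) ℝ≥0)
    {Ω : Type*} [MeasurableSpace Ω] (μ : Measure Ω) [IsProbabilityMeasure μ]
    (Z : Fin d → Ω → ℝ≥0) (hmeas : ∀ i, Measurable (Z i))
    (hindep : iIndepFun Z μ)
    (hpos : ∀ i ω, 0 < Z i ω)
    (hatom : ∀ i (c : ℝ≥0), μ {ω | Z i ω = c} = 0)
    (g : Fin d → Fin d → Prop)
    (hg : μ {ω | ∀ i j, impactEdge C (fun k => Z k ω) i j ↔ g i j} ≠ 0) :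
    maxCycleMean (exchangeMatrix (kleene C) g) < 1 := by
  have hgen : ∀ᵐ ω ∂μ, ∀ i r r', r ≠ r' →
      Z r' ω ≠ kleene C i r / kleene C i r' * Z r ω := by
    simp only [ae_all_iff]
    intro i r r' hr
    exact (hindep.indepFun hr).ae_ne_comp (hmeas r) (hmeas r') (measurable_const_mul _)
      (hatom r')
  obtain ⟨ω, hωgen, hωg⟩ := (hgen.and_frequently (frequently_ae_mem_iff.2 hg)).exists
  have hz : ∀ k, 0 < Z k ω := (hpos · ω)
  refine maxCycleMean_lt_one fun r c => cycleWeight_lt_one hz (exchangeMatrix_mul_lt hz ?_) c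
  exact fun i r r' hgir hr' => ((hωg i r).2 hgir).mul_lt hz hωgen hr'

/-- If `g` is an impact graph with positive probability, then the maximum cycle mean of its
impact exchange matrix is strictly less than `1`. -/
theorem stmt9 {d : ℕ} (C : Matrix (Fin d) (Fin d) ℝ≥0) (hC : SupportAcyclic C)
    {Ω : Type*} [MeasurableSpace Ω] (μ : Measure Ω) [IsProbabilityMeasure μ]
    (Z : Fin d → Ω → ℝ≥0) (hmeas : ∀ i, Measurable (Z i))
    (hindep : iIndepFun Z μ)
    (hpos : ∀ i ω, 0 < Z i ω)
    (hatom : ∀ i (c : ℝ≥0), μ {ω | Z i ω = c} = 0)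
    (g : Fin d → Fin d → Prop)
    (hg : μ {ω | ∀ i j, impactEdge C (fun k => Z k ω) i j ↔ g i j} ≠ 0) :
    maxCycleMean (exchangeMatrix (kleene C) g) < 1 :=
  stmt9_general C μ Z hmeas hindep hpos hatom g hg
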